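/- (Concavity of directed information in the causally conditioned input distribution) Fix finite alphabets 𝒳, 𝒴 and a channel given by a family of conditional pmfs {P(y_i | y^{i-1}, x^i)}_{i=1}^n. For each causally conditioned input distribution Q, given by a family of conditional pmfs {Q(x_i | x^{i-1}, y^{i-1})}_{i=1}^n, define the joint pmf P_Q(x^n, y^n) := ∏_{i=1}^n Q(x_i | x^{i-1}, y^{i-1}) P(y_i | y^{i-1}, x^i) and let I_Q(X^n→Y^n) be the directed information under P_Q. Then the map Q(x^n‖y^{n-1}) := ∏_{i=1}^n Q(x_i | x^{i-1}, y^{i-1}) ↦ I_Q(X^n→Y^n) is concave on the polytope of causally conditioned input distributions: for CC input distributions Q_0, Q_1 and λ ∈ [0,1], the CC distribution whose values are λ·Q_1(x^n‖y^{n-1}) + (1−λ)·Q_0(x^n‖y^{n-1}) yields directed information at least λ·I_{Q_1} + (1−λ)·I_{Q_0}. In particular, maximizing I(X^n→Y^n) over this polytope is a convex optimization problem. -/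

import Mathlib

open Finset

noncomputable section

-- Probability of the event `E` under the pmf `p` on a finite sample space `Ω`.
open Classical in
def pr {Ω : Type*} [Fintype Ω] (p : Ω → ℝ) (E : Ω → Prop) : ℝ :=
  ∑ ω, if E ω then p ω else 0

-- Shannon entropy `H(U)` (pointwise form).
def entropy {Ω α : Type*} [Fintype Ω] (p : Ω → ℝ) (U : Ω → α) : ℝ :=
  -∑ ω, p ω * Real.log (pr p (fun ω' => U ω' = U ω))

-- Conditional Shannon entropy `H(U | V)`.
def condEntropy {Ω α β : Type*} [Fintype Ω] (p : Ω → ℝ) (U : Ω → α) (V : Ω → β) : ℝ :=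
  -∑ ω, p ω * Real.log
      (pr p (fun ω' => U ω' = U ω ∧ V ω' = V ω) / pr p (fun ω' => V ω' = V ω))

-- Mutual information `I(U ; V)`.
def mutualInfo {Ω α β : Type*} [Fintype Ω] (p : Ω → ℝ) (U : Ω → α) (V : Ω → β) : ℝ :=
  ∑ ω, p ω * Real.log
      (pr p (fun ω' => U ω' = U ω ∧ V ω' = V ω) /
        (pr p (fun ω' => U ω' = U ω) * pr p (fun ω' => V ω' = V ω)))

-- Conditional mutual information `I(U ; V | W)`.
def condMutualInfo {Ω α β γ : Type*} [Fintype Ω] (p : Ω → ℝ)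
    (U : Ω → α) (V : Ω → β) (W : Ω → γ) : ℝ :=
  ∑ ω, p ω * Real.log
      ((pr p (fun ω' => U ω' = U ω ∧ V ω' = V ω ∧ W ω' = W ω) *
          pr p (fun ω' => W ω' = W ω)) /
        (pr p (fun ω' => U ω' = U ω ∧ W ω' = W ω) *
          pr p (fun ω' => V ω' = V ω ∧ W ω' = W ω)))

-- The prefix `(X_0, …, X_{i-1})` of a random sequence `X`.
def prefixSeq {Ω 𝒳 : Type*} (X : Ω → ℕ → 𝒳) (i : ℕ) : Ω → (Fin i → 𝒳) :=
  fun ω j => X ω (j : ℕ)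

-- Directed information `I(X^n → Y^n) = ∑_{i=1}^n I(X^i ; Y_i | Y^{i-1})` (0-indexed).
def directedInfo {Ω 𝒳 𝒴 : Type*} [Fintype Ω] (p : Ω → ℝ)
    (X : Ω → ℕ → 𝒳) (Y : Ω → ℕ → 𝒴) (n : ℕ) : ℝ :=
  ∑ i ∈ Finset.range n,
    condMutualInfo p (prefixSeq X (i + 1)) (fun ω => Y ω i) (prefixSeq Y i)

-- Restriction of a length-`n` tuple to its first `k` coordinates (junk beyond `n`).
def restr {𝒳 : Type*} [Nonempty 𝒳] {n : ℕ} (a : Fin n → 𝒳) (k : ℕ) : Fin k → 𝒳 :=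
  fun j => if h : (j : ℕ) < n then a ⟨(j : ℕ), h⟩ else Classical.arbitrary 𝒳

-- Extension of a length-`n` tuple to an infinite sequence (junk beyond `n`).
def extSeq {𝒳 : Type*} [Nonempty 𝒳] {n : ℕ} (a : Fin n → 𝒳) : ℕ → 𝒳 :=
  fun i => if h : i < n then a ⟨i, h⟩ else Classical.arbitrary 𝒳

-- The joint pmf `P_Q(x^n, y^n) = ∏_i Q(x_i | x^{i-1}, y^{i-1}) P(y_i | y^{i-1}, x^i)`
-- induced by a causally conditioned input distribution `Q` and a channel `P`.
def jointOfPolicy {𝒳 𝒴 : Type*} [Nonempty 𝒳] [Nonempty 𝒴] {n : ℕ}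
    (Q : (i : ℕ) → (Fin i → 𝒳) → (Fin i → 𝒴) → 𝒳 → ℝ)
    (P : (i : ℕ) → (Fin (i + 1) → 𝒳) → (Fin i → 𝒴) → 𝒴 → ℝ) :
    (Fin n → 𝒳) × (Fin n → 𝒴) → ℝ :=
  fun ab => ∏ i : Fin n,
    (Q (i : ℕ) (restr ab.1 (i : ℕ)) (restr ab.2 (i : ℕ)) (ab.1 i) *
      P (i : ℕ) (restr ab.1 ((i : ℕ) + 1)) (restr ab.2 (i : ℕ)) (ab.2 i))

/-! Whatever the input policy `Q`, the channel gives the factorisation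
`P_Q(x^{i+1}, y^{i+1}) = P(y_i | x^{i+1}, y^i) · P_Q(x^{i+1}, y^i)`, so the `i`-th term of the
directed information splits as
`I(X^{i+1}; Y_i | Y^i) = E[log P(Y_i | X^{i+1}, Y^i)] + H(Y_i | Y^i)`.
Mixing the causally conditioned input laws mixes the joint laws; the first summand is linear in the
joint law and conditional entropy is concave (Gibbs' inequality against the mixture), so every
term is concave. The factorisation itself comes from computing the marginals of a causal product
of kernels on the zipped sequence of input-output pairs. -/

section FiniteProbability

variable {Ω β κ : Type*} [Fintype Ω]

lemma pr_nonneg {p : Ω → ℝ} (hp : ∀ ω, 0 ≤ p ω) (E : Ω → Prop) : 0 ≤ pr p E :=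
  sum_nonneg fun ω _ => by split_ifs <;> simp [hp ω]

lemma le_pr {p : Ω → ℝ} (hp : ∀ ω, 0 ≤ p ω) {E : Ω → Prop} {ω : Ω} (hω : E ω) :
    p ω ≤ pr p E := by
  classical
  unfold pr
  simpa [hω] using single_le_sum (f := fun ω => if E ω then p ω else 0)
    (fun ω _ => by split_ifs <;> simp [hp ω]) (mem_univ ω)

lemma pr_pos {p : Ω → ℝ} (hp : ∀ ω, 0 ≤ p ω) {E : Ω → Prop} {ω : Ω} (hpω : 0 < p ω)
    (hω : E ω) : 0 < pr p E :=
  hpω.trans_le (le_pr hp hω)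

lemma pr_congr (p : Ω → ℝ) {E F : Ω → Prop} (h : ∀ ω, E ω ↔ F ω) : pr p E = pr p F :=
  congrArg (pr p) (funext fun ω => propext (h ω))

lemma pr_eq_apply (p : Ω → ℝ) (a : Ω) : pr p (fun ω => ω = a) = p a := by
  classical
  unfold pr
  simp

lemma pr_true (p : Ω → ℝ) : pr p (fun _ => True) = ∑ ω, p ω := by
  simp [pr]

lemma pr_comp_equiv {Ω' : Type*} [Fintype Ω'] (e : Ω' ≃ Ω) (p : Ω → ℝ) (E : Ω → Prop) :
    pr p E = pr (fun ω' => p (e ω')) (fun ω' => E (e ω')) :=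
  (e.sum_comp _).symm

lemma sum_mix_mul (a b : ℝ) (p q g : Ω → ℝ) :
    ∑ ω, (a * p ω + b * q ω) * g ω = a * ∑ ω, p ω * g ω + b * ∑ ω, q ω * g ω := by
  simp only [add_mul, mul_assoc, sum_add_distrib, mul_sum]

lemma pr_mix (a b : ℝ) (p q : Ω → ℝ) (E : Ω → Prop) :
    pr (fun ω => a * p ω + b * q ω) E = a * pr p E + b * pr q E := by
  simp only [pr, mul_sum, ← sum_add_distrib]
  exact sum_congr rfl fun ω _ => by split_ifs <;> ring

lemma sum_pr_and_eq [Fintype κ] (p : Ω → ℝ) (E : Ω → Prop) (f : Ω → κ) :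
    ∑ c, pr p (fun ω => E ω ∧ f ω = c) = pr p E := by
  classical
  unfold pr
  rw [sum_comm]
  refine sum_congr rfl fun ω _ => ?_
  by_cases hE : E ω <;> simp [hE]

lemma sum_image_pr_mul [DecidableEq κ] (p : Ω → ℝ) (f : Ω → κ) (G : κ → ℝ) :
    ∑ c ∈ univ.image f, pr p (fun ω => f ω = c) * G c = ∑ ω, p ω * G (f ω) := by
  simp only [pr, sum_mul]
  rw [sum_comm]
  refine sum_congr rfl fun ω _ => ?_
  simp [ite_mul]

lemma sum_mul_div_pr_le [DecidableEq κ] {q : Ω → ℝ} (hq : ∀ ω, 0 ≤ q ω) (f : Ω → κ)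
    {F : κ → ℝ} (hF : ∀ c, 0 ≤ F c) :
    ∑ ω, q ω * (F (f ω) / pr q (fun ω' => f ω' = f ω)) ≤ ∑ c ∈ univ.image f, F c := by
  rw [← sum_image_pr_mul q f (fun c => F c / pr q (fun ω' => f ω' = c))]
  refine sum_le_sum fun c _ => ?_
  rcases (pr_nonneg hq (fun ω' => f ω' = c)).eq_or_lt with h | h
  · simp [← h, hF c]
  · rw [mul_div_cancel₀ _ h.ne']

/-- `p(f | g ∘ f) · q(g ∘ f)` is a sub-probability law of `f`, so its likelihood ratio against
`q(f)` has `q`-mean at most one. -/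
lemma sum_mul_likelihoodRatio_le_one {q p : Ω → ℝ} (hq : ∀ ω, 0 ≤ q ω) (hq1 : ∑ ω, q ω = 1)
    (hp : ∀ ω, 0 ≤ p ω) (f : Ω → κ) (g : κ → β) :
    ∑ ω, q ω * (pr p (fun ω' => f ω' = f ω) *
        (pr q (fun ω' => g (f ω') = g (f ω)) / pr p (fun ω' => g (f ω') = g (f ω))) /
          pr q (fun ω' => f ω' = f ω)) ≤ 1 := by
  classical
  calc _ ≤ ∑ c ∈ univ.image f, pr p (fun ω' => f ω' = c) *
          (pr q (fun ω' => g (f ω') = g c) / pr p (fun ω' => g (f ω') = g c)) :=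
        sum_mul_div_pr_le hq f fun c =>
          mul_nonneg (pr_nonneg hp _) (div_nonneg (pr_nonneg hq _) (pr_nonneg hp _))
    _ = ∑ ω, p ω * (pr q (fun ω' => g (f ω') = g (f ω)) /
          pr p (fun ω' => g (f ω') = g (f ω))) :=
        sum_image_pr_mul p f _
    _ ≤ ∑ b ∈ univ.image (fun ω => g (f ω)), pr q (fun ω' => g (f ω') = b) :=
        sum_mul_div_pr_le hp (fun ω => g (f ω)) (F := fun b => pr q (fun ω' => g (f ω') = b))
          fun b => pr_nonneg hq _
    _ = 1 := by
        simpa [hq1] using sum_image_pr_mul q (fun ω => g (f ω)) fun _ => 1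

end FiniteProbability

section ConditionalEntropy

variable {Ω α β : Type*} [Fintype Ω]

def crossCondEntropy (q p : Ω → ℝ) (U : Ω → α) (V : Ω → β) : ℝ :=
  -∑ ω, q ω * Real.log
      (pr p (fun ω' => U ω' = U ω ∧ V ω' = V ω) / pr p (fun ω' => V ω' = V ω))

lemma crossCondEntropy_self (p : Ω → ℝ) (U : Ω → α) (V : Ω → β) :
    crossCondEntropy p p U V = condEntropy p U V :=
  rfl

lemma crossCondEntropy_mix (a b : ℝ) (q₁ q₀ p : Ω → ℝ) (U : Ω → α) (V : Ω → β) :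
    crossCondEntropy (fun ω => a * q₁ ω + b * q₀ ω) p U V =
      a * crossCondEntropy q₁ p U V + b * crossCondEntropy q₀ p U V := by
  simp only [crossCondEntropy, sum_mix_mul]
  ring

lemma sum_mul_log_div_le {q a b c d : Ω → ℝ} (hq : ∀ ω, 0 ≤ q ω) (hq1 : ∑ ω, q ω = 1)
    (hratio : ∑ ω, q ω * (a ω * (d ω / b ω) / c ω) ≤ 1)
    (hpos : ∀ ω, 0 < q ω → 0 < a ω ∧ 0 < b ω ∧ 0 < c ω ∧ 0 < d ω) :
    ∑ ω, q ω * Real.log (a ω / b ω) ≤ ∑ ω, q ω * Real.log (c ω / d ω) := by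
  have hpointwise : ∀ ω, q ω * Real.log (a ω / b ω) ≤
      q ω * Real.log (c ω / d ω) + (q ω * (a ω * (d ω / b ω) / c ω) - q ω) := by
    intro ω
    rcases (hq ω).eq_or_lt with h | hqω
    · simp [← h]
    obtain ⟨ha, hb, hc, hd⟩ := hpos ω hqω
    have h := Real.log_le_sub_one_of_pos (show 0 < (a ω / b ω) / (c ω / d ω) by positivity)
    rw [Real.log_div (by positivity) (by positivity)] at h
    rw [show a ω * (d ω / b ω) / c ω = (a ω / b ω) / (c ω / d ω) by
      rw [div_div_eq_mul_div]; ring]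
    nlinarith [mul_le_mul_of_nonneg_left h hqω.le]
  have hsum := sum_le_sum fun ω (_ : ω ∈ univ) => hpointwise ω
  rw [sum_add_distrib, sum_sub_distrib, hq1] at hsum
  linarith

/-- Gibbs' inequality for conditional distributions. -/
theorem condEntropy_le_crossCondEntropy {q p : Ω → ℝ} (hq : ∀ ω, 0 ≤ q ω)
    (hq1 : ∑ ω, q ω = 1) (hp : ∀ ω, 0 ≤ p ω) (hqp : ∀ ω, 0 < q ω → 0 < p ω)
    (U : Ω → α) (V : Ω → β) :
    condEntropy q U V ≤ crossCondEntropy q p U V := by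
  have hratio := sum_mul_likelihoodRatio_le_one hq hq1 hp (fun ω => (U ω, V ω)) Prod.snd
  simp only [Prod.mk_inj] at hratio
  have := sum_mul_log_div_le hq hq1 hratio fun ω hqω => ⟨pr_pos hp (hqp ω hqω) ⟨rfl, rfl⟩,
    pr_pos hp (hqp ω hqω) rfl, pr_pos hq hqω ⟨rfl, rfl⟩, pr_pos hq hqω rfl⟩
  simp only [condEntropy, crossCondEntropy]
  linarith

theorem condEntropy_concave {p₀ p₁ : Ω → ℝ} (hp₀ : ∀ ω, 0 ≤ p₀ ω) (hp₀1 : ∑ ω, p₀ ω = 1)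
    (hp₁ : ∀ ω, 0 ≤ p₁ ω) (hp₁1 : ∑ ω, p₁ ω = 1) {lam : ℝ} (hlam0 : 0 ≤ lam)
    (hlam1 : lam ≤ 1) (U : Ω → α) (V : Ω → β) :
    lam * condEntropy p₁ U V + (1 - lam) * condEntropy p₀ U V ≤
      condEntropy (fun ω => lam * p₁ ω + (1 - lam) * p₀ ω) U V := by
  set m := fun ω => lam * p₁ ω + (1 - lam) * p₀ ω
  have hm : ∀ ω, 0 ≤ m ω := fun ω => by
    have := hp₀ ω; have := hp₁ ω; simp only [m]; nlinarith
  have hgibbs : ∀ (t : ℝ) (r : Ω → ℝ), 0 ≤ t → (∀ ω, 0 ≤ r ω) → ∑ ω, r ω = 1 →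
      (∀ ω, t * r ω ≤ m ω) → t * condEntropy r U V ≤ t * crossCondEntropy r m U V := by
    intro t r ht hr hr1 htr
    rcases ht.eq_or_lt with rfl | ht
    · simp
    exact mul_le_mul_of_nonneg_left (condEntropy_le_crossCondEntropy hr hr1 hm
      (fun ω hω => (mul_pos ht hω).trans_le (htr ω)) U V) ht.le
  calc lam * condEntropy p₁ U V + (1 - lam) * condEntropy p₀ U V
      ≤ lam * crossCondEntropy p₁ m U V + (1 - lam) * crossCondEntropy p₀ m U V :=
        add_le_add
          (hgibbs lam p₁ hlam0 hp₁ hp₁1 fun ω => by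
            have := hp₀ ω; simp only [m]; nlinarith)
          (hgibbs (1 - lam) p₀ (by linarith) hp₀ hp₀1 fun ω => by
            have := hp₁ ω; simp only [m]; nlinarith)
    _ = condEntropy m U V := by rw [← crossCondEntropy_mix, crossCondEntropy_self]

end ConditionalEntropy

section ConditionalMutualInformation

variable {Ω α β γ : Type*} [Fintype Ω]

lemma condMutualInfo_eq_of_factor {q : Ω → ℝ} (hq : ∀ ω, 0 ≤ q ω)
    (U : Ω → α) (V : Ω → β) (W : Ω → γ) (c : Ω → ℝ)
    (hc : ∀ ω, pr q (fun ω' => U ω' = U ω ∧ V ω' = V ω ∧ W ω' = W ω) =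
      c ω * pr q (fun ω' => U ω' = U ω ∧ W ω' = W ω)) :
    condMutualInfo q U V W = ∑ ω, q ω * Real.log (c ω) + condEntropy q V W := by
  rw [condEntropy, ← sub_eq_add_neg, ← sum_sub_distrib]
  refine sum_congr rfl fun ω _ => ?_
  rcases (hq ω).eq_or_lt with h | hqω
  · simp [← h]
  have hUVW : 0 < pr q (fun ω' => U ω' = U ω ∧ V ω' = V ω ∧ W ω' = W ω) :=
    pr_pos hq hqω ⟨rfl, rfl, rfl⟩
  have hUW : 0 < pr q (fun ω' => U ω' = U ω ∧ W ω' = W ω) := pr_pos hq hqω ⟨rfl, rfl⟩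
  have hVW : 0 < pr q (fun ω' => V ω' = V ω ∧ W ω' = W ω) := pr_pos hq hqω ⟨rfl, rfl⟩
  have hW : 0 < pr q (fun ω' => W ω' = W ω) := pr_pos hq hqω rfl
  have hcω : 0 < c ω := pos_of_mul_pos_left (hc ω ▸ hUVW) hUW.le
  rw [hc ω, ← mul_sub, ← Real.log_div hcω.ne' (by positivity)]
  congr 2
  field_simp

theorem condMutualInfo_concave_of_factor {p₀ p₁ : Ω → ℝ} (hp₀ : ∀ ω, 0 ≤ p₀ ω)
    (hp₀1 : ∑ ω, p₀ ω = 1) (hp₁ : ∀ ω, 0 ≤ p₁ ω) (hp₁1 : ∑ ω, p₁ ω = 1) {lam : ℝ}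
    (hlam0 : 0 ≤ lam) (hlam1 : lam ≤ 1) (U : Ω → α) (V : Ω → β) (W : Ω → γ) (c : Ω → ℝ)
    (hc₀ : ∀ ω, pr p₀ (fun ω' => U ω' = U ω ∧ V ω' = V ω ∧ W ω' = W ω) =
      c ω * pr p₀ (fun ω' => U ω' = U ω ∧ W ω' = W ω))
    (hc₁ : ∀ ω, pr p₁ (fun ω' => U ω' = U ω ∧ V ω' = V ω ∧ W ω' = W ω) =
      c ω * pr p₁ (fun ω' => U ω' = U ω ∧ W ω' = W ω)) :
    lam * condMutualInfo p₁ U V W + (1 - lam) * condMutualInfo p₀ U V W ≤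
      condMutualInfo (fun ω => lam * p₁ ω + (1 - lam) * p₀ ω) U V W := by
  have hm : ∀ ω, 0 ≤ lam * p₁ ω + (1 - lam) * p₀ ω := fun ω => by
    have := hp₀ ω; have := hp₁ ω; nlinarith
  have hcm : ∀ ω, pr (fun ω => lam * p₁ ω + (1 - lam) * p₀ ω)
      (fun ω' => U ω' = U ω ∧ V ω' = V ω ∧ W ω' = W ω) =
      c ω * pr (fun ω => lam * p₁ ω + (1 - lam) * p₀ ω)
        (fun ω' => U ω' = U ω ∧ W ω' = W ω) := fun ω => by
    rw [pr_mix, pr_mix, hc₀, hc₁]; ring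
  rw [condMutualInfo_eq_of_factor hp₀ U V W c hc₀, condMutualInfo_eq_of_factor hp₁ U V W c hc₁,
    condMutualInfo_eq_of_factor hm U V W c hcm, sum_mix_mul]
  linarith [condEntropy_concave hp₀ hp₀1 hp₁ hp₁1 hlam0 hlam1 V W]

end ConditionalMutualInformation

section CausalProduct

variable {Z : Type*} {n : ℕ}

lemma forall_lt_succ_eq_update_iff {k : ℕ} (hk : k < n) (z a : Fin n → Z) (c : Z) :
    (∀ j : Fin n, (j : ℕ) < k + 1 → z j = Function.update a ⟨k, hk⟩ c j) ↔
      (∀ j : Fin n, (j : ℕ) < k → z j = a j) ∧ z ⟨k, hk⟩ = c := by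
  constructor
  · intro h
    refine ⟨fun j hj => ?_, by simpa using h ⟨k, hk⟩ k.lt_succ_self⟩
    rw [h j (by omega), Function.update_of_ne (Fin.ne_of_val_ne (show (j : ℕ) ≠ k by omega))]
  · rintro ⟨h, rfl⟩ j hj
    rcases (Nat.lt_succ_iff_lt_or_eq.mp hj) with hj | hj
    · rw [Function.update_of_ne (Fin.ne_of_val_ne (show (j : ℕ) ≠ k by omega)), h j hj]
    · obtain rfl : j = ⟨k, hk⟩ := Fin.ext hj
      simp

variable {κ : Fin n → (Fin n → Z) → ℝ}

lemma prod_castLE_succ_update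
    (hκ : ∀ j z z', (∀ l, l ≤ j → z l = z' l) → κ j z = κ j z') {k : ℕ} (hk : k < n)
    (a : Fin n → Z) (c : Z) :
    ∏ j : Fin (k + 1), κ (Fin.castLE hk j) (Function.update a ⟨k, hk⟩ c) =
      (∏ j : Fin k, κ (Fin.castLE hk.le j) a) * κ ⟨k, hk⟩ (Function.update a ⟨k, hk⟩ c) := by
  rw [Fin.prod_univ_castSucc]
  congr 1
  refine prod_congr rfl fun j _ => ?_
  rw [Fin.castLE_castSucc]
  refine hκ _ _ _ fun l hl => Function.update_of_ne (Fin.ne_of_val_ne ?_) _ _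
  have := j.isLt
  simp only [Fin.le_def, Fin.val_castLE] at hl
  show (l : ℕ) ≠ k
  omega

variable [Fintype Z]

theorem pr_prefix_eq_prod (hκ : ∀ j z z', (∀ l, l ≤ j → z l = z' l) → κ j z = κ j z')
    (hκ1 : ∀ j z, ∑ c, κ j (Function.update z j c) = 1) {k : ℕ} (hk : k ≤ n)
    (a : Fin n → Z) :
    pr (fun z => ∏ j, κ j z) (fun z => ∀ j : Fin n, (j : ℕ) < k → z j = a j) =
      ∏ j : Fin k, κ (Fin.castLE hk j) a := by
  induction hk using Nat.decreasingInduction generalizing a with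
  | self =>
    rw [pr_congr _ fun z => ⟨fun h => funext fun j => h j j.isLt, fun h j _ => h ▸ rfl⟩,
      pr_eq_apply]
    simp
  | of_succ k hk ih =>
    rw [← sum_pr_and_eq _ _ fun z => z ⟨k, hk⟩]
    simp_rw [← pr_congr _ fun z => forall_lt_succ_eq_update_iff hk z a _, ih,
      prod_castLE_succ_update hκ hk, ← mul_sum, hκ1, mul_one]

theorem pr_prefix_and_eq (hκ : ∀ j z z', (∀ l, l ≤ j → z l = z' l) → κ j z = κ j z')
    (hκ1 : ∀ j z, ∑ c, κ j (Function.update z j c) = 1) {k : ℕ} (hk : k < n)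
    (a : Fin n → Z) (c : Z) :
    pr (fun z => ∏ j, κ j z) (fun z => (∀ j : Fin n, (j : ℕ) < k → z j = a j) ∧ z ⟨k, hk⟩ = c) =
      (∏ j : Fin k, κ (Fin.castLE hk.le j) a) * κ ⟨k, hk⟩ (Function.update a ⟨k, hk⟩ c) := by
  rw [← pr_congr _ fun z => forall_lt_succ_eq_update_iff hk z a c,
    pr_prefix_eq_prod hκ hκ1 hk, prod_castLE_succ_update hκ hk]

end CausalProduct

section ClosedLoop

variable {𝒳 𝒴 : Type*} {n : ℕ}

lemma fst_snd_prefix_eq_iff {i : ℕ} (hi : i < n) (a : Fin n → 𝒳) (b : Fin n → 𝒴)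
    (z : Fin n → 𝒳 × 𝒴) (y : 𝒴) :
    ((∀ j : Fin n, (j : ℕ) < i + 1 → (z j).1 = a j) ∧ (z ⟨i, hi⟩).2 = y ∧
        ∀ j : Fin n, (j : ℕ) < i → (z j).2 = b j) ↔
      (∀ j : Fin n, (j : ℕ) < i → z j = (a j, b j)) ∧ z ⟨i, hi⟩ = (a ⟨i, hi⟩, y) := by
  refine ⟨fun ⟨hx, hyi, hy⟩ => ⟨fun j hj => Prod.ext (hx j (by omega)) (hy j hj),
    Prod.ext (hx _ i.lt_succ_self) hyi⟩, fun ⟨h, hzi⟩ => ⟨fun j hj => ?_, by rw [hzi],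
    fun j hj => by rw [h j hj]⟩⟩
  rcases Nat.lt_succ_iff_lt_or_eq.mp hj with hj | hj
  · rw [h j hj]
  · obtain rfl : j = ⟨i, hi⟩ := Fin.ext hj
    rw [hzi]

variable [Nonempty 𝒳] [Nonempty 𝒴]

lemma restr_congr {a a' : Fin n → 𝒳} {k : ℕ} (h : ∀ j : Fin n, (j : ℕ) < k → a j = a' j) :
    restr a k = restr a' k := by
  funext j
  unfold restr
  split_ifs with hj
  · exact h _ j.isLt
  · rfl

lemma restr_update_self (a : Fin n → 𝒳) (j : Fin n) (x : 𝒳) :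
    restr (Function.update a j x) j = restr a j :=
  restr_congr fun _ hl => Function.update_of_ne (Fin.ne_of_lt hl) _ _

variable (Q : (i : ℕ) → (Fin i → 𝒳) → (Fin i → 𝒴) → 𝒳 → ℝ)
  (P : (i : ℕ) → (Fin (i + 1) → 𝒳) → (Fin i → 𝒴) → 𝒴 → ℝ)

/-- The factor of `jointOfPolicy Q P` at time `j`, as a function of the zipped sequence of
input–output pairs. -/
def closedLoopKernel (j : Fin n) (z : Fin n → 𝒳 × 𝒴) : ℝ :=
  Q j (restr (Prod.fst ∘ z) j) (restr (Prod.snd ∘ z) j) (z j).1 *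
    P j (restr (Prod.fst ∘ z) (j + 1)) (restr (Prod.snd ∘ z) j) (z j).2

lemma closedLoopKernel_congr (j : Fin n) (z z' : Fin n → 𝒳 × 𝒴)
    (h : ∀ l, l ≤ j → z l = z' l) : closedLoopKernel Q P j z = closedLoopKernel Q P j z' := by
  have hz : ∀ l : Fin n, (l : ℕ) < j + 1 → z l = z' l := fun l hl =>
    h l (Fin.le_def.mpr (by omega))
  have hx : ∀ m ≤ (j : ℕ) + 1, restr (Prod.fst ∘ z) m = restr (Prod.fst ∘ z') m :=
    fun m hm => restr_congr fun l hl => congrArg Prod.fst (hz l (by omega))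
  have hy : restr (Prod.snd ∘ z) j = restr (Prod.snd ∘ z') j :=
    restr_congr fun l hl => congrArg Prod.snd (hz l (by omega))
  rw [closedLoopKernel, closedLoopKernel, h j le_rfl, hx j (by omega), hx (j + 1) le_rfl, hy]

lemma closedLoopKernel_update (j : Fin n) (z : Fin n → 𝒳 × 𝒴) (c : 𝒳 × 𝒴) :
    closedLoopKernel Q P j (Function.update z j c) =
      Q j (restr (Prod.fst ∘ z) j) (restr (Prod.snd ∘ z) j) c.1 *
        P j (restr (Function.update (Prod.fst ∘ z) j c.1) (j + 1)) (restr (Prod.snd ∘ z) j)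
          c.2 := by
  simp only [closedLoopKernel, Function.comp_update, Function.update_self, restr_update_self]

variable [Fintype 𝒳] [Fintype 𝒴]

lemma sum_closedLoopKernel_update (hQ1 : ∀ i xs ys, ∑ x, Q i xs ys x = 1)
    (hP1 : ∀ i xs ys, ∑ y, P i xs ys y = 1) (j : Fin n) (z : Fin n → 𝒳 × 𝒴) :
    ∑ c, closedLoopKernel Q P j (Function.update z j c) = 1 := by
  simp only [closedLoopKernel_update, Fintype.sum_prod_type, ← mul_sum, hP1, mul_one, hQ1]

omit [Fintype 𝒳] [Fintype 𝒴] in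
lemma jointOfPolicy_nonneg (hQ0 : ∀ i xs ys x, 0 ≤ Q i xs ys x)
    (hP0 : ∀ i xs ys y, 0 ≤ P i xs ys y) (ω : (Fin n → 𝒳) × (Fin n → 𝒴)) :
    0 ≤ jointOfPolicy Q P ω :=
  prod_nonneg fun _ _ => mul_nonneg (hQ0 _ _ _ _) (hP0 _ _ _ _)

lemma pr_jointOfPolicy_eq_pr_prod (E : (Fin n → 𝒳) × (Fin n → 𝒴) → Prop) :
    pr (jointOfPolicy Q P) E =
      pr (fun z => ∏ j, closedLoopKernel Q P j z) (fun z => E (Prod.fst ∘ z, Prod.snd ∘ z)) :=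
  pr_comp_equiv (Equiv.arrowProdEquivProdArrow (Fin n) (fun _ => 𝒳) (fun _ => 𝒴)) _ _

lemma sum_jointOfPolicy (hQ1 : ∀ i xs ys, ∑ x, Q i xs ys x = 1)
    (hP1 : ∀ i xs ys, ∑ y, P i xs ys y = 1) :
    ∑ ω, jointOfPolicy (n := n) Q P ω = 1 := by
  have h := pr_prefix_eq_prod (closedLoopKernel_congr Q P)
    (sum_closedLoopKernel_update Q P hQ1 hP1) (Nat.zero_le n) fun _ => Classical.arbitrary _
  simp only [not_lt_zero, false_imp_iff, imp_true_iff, Finset.univ_eq_empty, prod_empty] at h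
  rw [← pr_true, pr_jointOfPolicy_eq_pr_prod, h]

theorem pr_jointOfPolicy_output_eq_channel_mul (hQ1 : ∀ i xs ys, ∑ x, Q i xs ys x = 1)
    (hP1 : ∀ i xs ys, ∑ y, P i xs ys y = 1) {i : ℕ} (hi : i < n) (a : Fin n → 𝒳)
    (b : Fin n → 𝒴) :
    pr (jointOfPolicy Q P) (fun ω => (∀ j : Fin n, (j : ℕ) < i + 1 → ω.1 j = a j) ∧
        ω.2 ⟨i, hi⟩ = b ⟨i, hi⟩ ∧ ∀ j : Fin n, (j : ℕ) < i → ω.2 j = b j) =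
      P i (restr a (i + 1)) (restr b i) (b ⟨i, hi⟩) *
        pr (jointOfPolicy Q P) (fun ω => (∀ j : Fin n, (j : ℕ) < i + 1 → ω.1 j = a j) ∧
          ∀ j : Fin n, (j : ℕ) < i → ω.2 j = b j) := by
  set z₀ : Fin n → 𝒳 × 𝒴 := fun j => (a j, b j)
  have hevent := fst_snd_prefix_eq_iff hi a b
  have hfactor : ∀ y, pr (fun z => ∏ j, closedLoopKernel Q P j z)
      (fun z => (∀ j : Fin n, (j : ℕ) < i → z j = z₀ j) ∧ z ⟨i, hi⟩ = (a ⟨i, hi⟩, y)) =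
      (∏ j : Fin i, closedLoopKernel Q P (Fin.castLE hi.le j) z₀) *
        (Q i (restr a i) (restr b i) (a ⟨i, hi⟩) * P i (restr a (i + 1)) (restr b i) y) := by
    intro y
    rw [pr_prefix_and_eq (closedLoopKernel_congr Q P) (sum_closedLoopKernel_update Q P hQ1 hP1),
      closedLoopKernel_update]
    simp only [show Prod.fst ∘ z₀ = a from rfl, show Prod.snd ∘ z₀ = b from rfl,
      Function.update_eq_self]
  have hmarginal : pr (jointOfPolicy Q P) (fun ω => (∀ j : Fin n, (j : ℕ) < i + 1 → ω.1 j = a j) ∧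
      ∀ j : Fin n, (j : ℕ) < i → ω.2 j = b j) =
      (∏ j : Fin i, closedLoopKernel Q P (Fin.castLE hi.le j) z₀) *
        Q i (restr a i) (restr b i) (a ⟨i, hi⟩) := by
    rw [pr_jointOfPolicy_eq_pr_prod, ← sum_pr_and_eq _ _ fun z => (z ⟨i, hi⟩).2]
    refine (sum_congr rfl fun y _ =>
      (pr_congr _ fun z => and_right_comm.trans (and_assoc.trans (hevent z y))).trans
        (hfactor y)).trans ?_
    rw [← mul_sum, ← mul_sum, hP1, mul_one]
  rw [hmarginal, (pr_jointOfPolicy_eq_pr_prod Q P _).trans (pr_congr _ fun z => hevent z _),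
    hfactor]
  ring

end ClosedLoop

section DirectedInformation

variable {𝒳 𝒴 : Type*} [Nonempty 𝒳] [Nonempty 𝒴] {n : ℕ}

lemma extSeq_prefix_eq_iff {k : ℕ} (hk : k ≤ n) (a a' : Fin n → 𝒳) :
    ((fun j : Fin k => extSeq a' j) = fun j : Fin k => extSeq a j) ↔
      ∀ j : Fin n, (j : ℕ) < k → a' j = a j := by
  refine ⟨fun h j hj => by simpa [extSeq] using congrFun h ⟨j, hj⟩, fun h => funext fun j => ?_⟩
  simpa [extSeq, (j.isLt.trans_le hk : (j : ℕ) < n)] using h ⟨j, j.isLt.trans_le hk⟩ j.isLt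

lemma extSeq_eq_iff {i : ℕ} (hi : i < n) (a a' : Fin n → 𝒳) :
    extSeq a' i = extSeq a i ↔ a' ⟨i, hi⟩ = a ⟨i, hi⟩ := by
  simp [extSeq, hi]

variable [Fintype 𝒳] [Fintype 𝒴] (Q : (i : ℕ) → (Fin i → 𝒳) → (Fin i → 𝒴) → 𝒳 → ℝ)
  (P : (i : ℕ) → (Fin (i + 1) → 𝒳) → (Fin i → 𝒴) → 𝒴 → ℝ)

lemma pr_jointOfPolicy_directedInfo_term (hQ1 : ∀ i xs ys, ∑ x, Q i xs ys x = 1)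
    (hP1 : ∀ i xs ys, ∑ y, P i xs ys y = 1) {i : ℕ} (hi : i < n)
    (ω : (Fin n → 𝒳) × (Fin n → 𝒴)) :
    pr (jointOfPolicy Q P) (fun ω' =>
        prefixSeq (fun ab : (Fin n → 𝒳) × (Fin n → 𝒴) => extSeq ab.1) (i + 1) ω' =
          prefixSeq (fun ab => extSeq ab.1) (i + 1) ω ∧
        extSeq ω'.2 i = extSeq ω.2 i ∧
        prefixSeq (fun ab : (Fin n → 𝒳) × (Fin n → 𝒴) => extSeq ab.2) i ω' =
          prefixSeq (fun ab => extSeq ab.2) i ω) =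
      P i (restr ω.1 (i + 1)) (restr ω.2 i) (ω.2 ⟨i, hi⟩) *
        pr (jointOfPolicy Q P) (fun ω' =>
          prefixSeq (fun ab : (Fin n → 𝒳) × (Fin n → 𝒴) => extSeq ab.1) (i + 1) ω' =
            prefixSeq (fun ab => extSeq ab.1) (i + 1) ω ∧
          prefixSeq (fun ab : (Fin n → 𝒳) × (Fin n → 𝒴) => extSeq ab.2) i ω' =
            prefixSeq (fun ab => extSeq ab.2) i ω) :=
  (pr_congr (jointOfPolicy Q P) fun ω' =>
      and_congr (extSeq_prefix_eq_iff hi ω.1 ω'.1)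
        (and_congr (extSeq_eq_iff hi ω.2 ω'.2) (extSeq_prefix_eq_iff hi.le ω.2 ω'.2))).trans
    ((pr_jointOfPolicy_output_eq_channel_mul Q P hQ1 hP1 hi ω.1 ω.2).trans
      (congrArg _ (pr_congr (jointOfPolicy Q P) fun ω' =>
        and_congr (extSeq_prefix_eq_iff hi ω.1 ω'.1) (extSeq_prefix_eq_iff hi.le ω.2 ω'.2)).symm))

end DirectedInformation

theorem directedInfo_concave_in_ccInput_general
    {𝒳 𝒴 : Type*} [Fintype 𝒳] [Fintype 𝒴] [Nonempty 𝒳] [Nonempty 𝒴] (n : ℕ)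
    (P : (i : ℕ) → (Fin (i + 1) → 𝒳) → (Fin i → 𝒴) → 𝒴 → ℝ)
    (hP0 : ∀ i xs ys y, 0 ≤ P i xs ys y)
    (hP1 : ∀ i xs ys, ∑ y, P i xs ys y = 1)
    (Q Q0 Q1 : (i : ℕ) → (Fin i → 𝒳) → (Fin i → 𝒴) → 𝒳 → ℝ)
    (hQ00 : ∀ i xs ys x, 0 ≤ Q0 i xs ys x) (hQ01 : ∀ i xs ys, ∑ x, Q0 i xs ys x = 1)
    (hQ10 : ∀ i xs ys x, 0 ≤ Q1 i xs ys x) (hQ11 : ∀ i xs ys, ∑ x, Q1 i xs ys x = 1)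
    (lam : ℝ) (hlam0 : 0 ≤ lam) (hlam1 : lam ≤ 1)
    (hmix : ∀ (a : Fin n → 𝒳) (b : Fin n → 𝒴),
      (∏ i : Fin n, Q (i : ℕ) (restr a (i : ℕ)) (restr b (i : ℕ)) (a i)) =
        lam * (∏ i : Fin n, Q1 (i : ℕ) (restr a (i : ℕ)) (restr b (i : ℕ)) (a i)) +
          (1 - lam) *
            ∏ i : Fin n, Q0 (i : ℕ) (restr a (i : ℕ)) (restr b (i : ℕ)) (a i)) :
    directedInfo (jointOfPolicy (n := n) Q P)
        (fun ab => extSeq ab.1) (fun ab => extSeq ab.2) n ≥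
      lam * directedInfo (jointOfPolicy (n := n) Q1 P)
          (fun ab => extSeq ab.1) (fun ab => extSeq ab.2) n +
        (1 - lam) * directedInfo (jointOfPolicy (n := n) Q0 P)
          (fun ab => extSeq ab.1) (fun ab => extSeq ab.2) n := by
  have hjoint : jointOfPolicy (n := n) Q P =
      fun ω => lam * jointOfPolicy Q1 P ω + (1 - lam) * jointOfPolicy Q0 P ω := by
    funext ω
    simp only [jointOfPolicy, prod_mul_distrib, hmix]
    ring
  rw [hjoint, ge_iff_le, directedInfo, directedInfo, directedInfo, mul_sum, mul_sum,
    ← sum_add_distrib]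
  refine sum_le_sum fun i hi => ?_
  have hi : i < n := mem_range.mp hi
  exact condMutualInfo_concave_of_factor (jointOfPolicy_nonneg Q0 P hQ00 hP0)
    (sum_jointOfPolicy Q0 P hQ01 hP1) (jointOfPolicy_nonneg Q1 P hQ10 hP0)
    (sum_jointOfPolicy Q1 P hQ11 hP1) hlam0 hlam1 _ _ _ _
    (pr_jointOfPolicy_directedInfo_term Q0 P hQ01 hP1 hi)
    (pr_jointOfPolicy_directedInfo_term Q1 P hQ11 hP1 hi)

/-- concavity of directed information in the causally conditioned
input distribution: if the causally conditioned input distribution of `Q` is the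
convex combination `λ·Q1(x^n‖y^{n-1}) + (1−λ)·Q0(x^n‖y^{n-1})`, then the directed
information under `Q` is at least `λ·I_{Q1} + (1−λ)·I_{Q0}`. -/
theorem directedInfo_concave_in_ccInput
    {𝒳 𝒴 : Type*} [Fintype 𝒳] [Fintype 𝒴] [Nonempty 𝒳] [Nonempty 𝒴] (n : ℕ)
    (P : (i : ℕ) → (Fin (i + 1) → 𝒳) → (Fin i → 𝒴) → 𝒴 → ℝ)
    (hP0 : ∀ i xs ys y, 0 ≤ P i xs ys y)
    (hP1 : ∀ i xs ys, ∑ y, P i xs ys y = 1)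
    (Q Q0 Q1 : (i : ℕ) → (Fin i → 𝒳) → (Fin i → 𝒴) → 𝒳 → ℝ)
    (hQ0 : ∀ i xs ys x, 0 ≤ Q i xs ys x) (hQ1 : ∀ i xs ys, ∑ x, Q i xs ys x = 1)
    (hQ00 : ∀ i xs ys x, 0 ≤ Q0 i xs ys x) (hQ01 : ∀ i xs ys, ∑ x, Q0 i xs ys x = 1)
    (hQ10 : ∀ i xs ys x, 0 ≤ Q1 i xs ys x) (hQ11 : ∀ i xs ys, ∑ x, Q1 i xs ys x = 1)
    (lam : ℝ) (hlam0 : 0 ≤ lam) (hlam1 : lam ≤ 1)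
    (hmix : ∀ (a : Fin n → 𝒳) (b : Fin n → 𝒴),
      (∏ i : Fin n, Q (i : ℕ) (restr a (i : ℕ)) (restr b (i : ℕ)) (a i)) =
        lam * (∏ i : Fin n, Q1 (i : ℕ) (restr a (i : ℕ)) (restr b (i : ℕ)) (a i)) +
          (1 - lam) *
            ∏ i : Fin n, Q0 (i : ℕ) (restr a (i : ℕ)) (restr b (i : ℕ)) (a i)) :
    directedInfo (jointOfPolicy (n := n) Q P)
        (fun ab => extSeq ab.1) (fun ab => extSeq ab.2) n ≥
      lam * directedInfo (jointOfPolicy (n := n) Q1 P)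
          (fun ab => extSeq ab.1) (fun ab => extSeq ab.2) n +
        (1 - lam) * directedInfo (jointOfPolicy (n := n) Q0 P)
          (fun ab => extSeq ab.1) (fun ab => extSeq ab.2) n :=
  directedInfo_concave_in_ccInput_general n P hP0 hP1 Q Q0 Q1 hQ00 hQ01 hQ10 hQ11 lam hlam0 hlam1
    hmix
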